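/- arXiv:0809.2017 — 3 statements merged into one kernel-verified Lean document; each statement's English description precedes it below -/
import Mathlib

section
/- For every n ≥ 0 and every 0 ≤ k ≤ n, the subspace H_k ⊆ C({0,1}^n) is invariant under the action of the automorphism group Aut({0,1}^n) of the Hamming cube on functions, and H_k is Aut({0,1}^n)-irreducible: every Aut({0,1}^n)-invariant linear subspace of H_k equals {0} or H_k. -/
/-- The character `χ_y(x) = (-1)^{y·x}` on the Hamming cube `{0,1}^n`. -/
noncomputable def hammingCharacter (n : ℕ) (y : Fin n → ZMod 2) :
    (Fin n → ZMod 2) → ℂ :=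
  fun x => (-1 : ℂ) ^ (∑ i : Fin n, (y i).val * (x i).val)

/-- `H_k`: the span of the characters `χ_y` with Hamming weight `‖y‖ = k`. -/
noncomputable def cubeH (n k : ℕ) : Submodule ℂ ((Fin n → ZMod 2) → ℂ) :=
  Submodule.span ℂ {f | ∃ y : Fin n → ZMod 2, hammingNorm y = k ∧ f = hammingCharacter n y}

/-- The automorphism group of the Hamming cube: the group of permutations of
`{0,1}^n` generated by coordinate permutations `x ↦ x ∘ σ⁻¹` and translations
`x ↦ x + v` (addition mod 2). -/
def cubeAut (n : ℕ) : Subgroup (Equiv.Perm (Fin n → ZMod 2)) :=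
  Subgroup.closure
    ({u | ∃ σ : Equiv.Perm (Fin n), u = σ.arrowCongr (Equiv.refl (ZMod 2))} ∪
     {u | ∃ v : Fin n → ZMod 2, u = Equiv.addLeft v})

/-!
The characters `χ_y` are additive characters of the group `{0,1}^n`, and the additive characters
of a finite abelian group form a basis of the functions on it. A translation by `v` multiplies
`χ_y` by the scalar `χ_y(v)`, and a coordinate permutation `σ` sends `χ_y` to `χ_{y ∘ σ⁻¹}`, which
has the same weight; hence `H_k` is invariant. Conversely, averaging the translates of a nonzero
`f ∈ W` against `χ_y(-v)` gives `2^n` times the `χ_y`-coordinate of `f` times `χ_y`, so a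
translation-invariant `W ≤ H_k` contains some `χ_y` with `‖y‖ = k`. Coordinate permutations act
transitively on the vectors of weight `k`, so `W` then contains every character spanning `H_k`.
-/

namespace AddChar

variable {G : Type*} [AddCommGroup G] [Fintype G]

lemma sum_apply_neg_mul_apply (ψ φ : AddChar G ℂ) :
    ∑ v, ψ (-v) * φ v = if φ = ψ then (Fintype.card G : ℂ) else 0 := by
  classical
  have h := sum_eq_ite (ψ⁻¹ * φ)
  simp only [mul_apply, inv_apply] at h
  rw [h]
  exact if_congr (by rw [← one_eq_zero, inv_mul_eq_one, eq_comm]) rfl rfl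

lemma sum_smul_translate (ψ : AddChar G ℂ) (f : G → ℂ) :
    ∑ v, ψ (-v) • (fun x => f (v + x)) =
      ((Fintype.card G : ℂ) * (complexBasis G).repr f ψ) • ⇑ψ := by
  set c := (complexBasis G).repr f
  have hf : ∀ y, f y = ∑ φ, c φ * φ y := fun y => by
    conv_lhs => rw [← (complexBasis G).sum_repr f]
    simp [c]
  funext x
  simp only [Finset.sum_apply, Pi.smul_apply, smul_eq_mul]
  calc ∑ v, ψ (-v) * f (v + x)
      = ∑ φ, c φ * φ x * ∑ v, ψ (-v) * φ v := by
        simp only [hf, map_add_eq_mul, Finset.mul_sum]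
        rw [Finset.sum_comm]
        exact Fintype.sum_congr _ _ fun φ => Fintype.sum_congr _ _ fun v => by ring
    _ = (Fintype.card G : ℂ) * c ψ * ψ x := by
        simp [sum_apply_neg_mul_apply, mul_comm, mul_left_comm]

lemma coe_mem_of_repr_ne_zero {W : Submodule ℂ (G → ℂ)}
    (hW : ∀ v, ∀ f ∈ W, (fun x => f (v + x)) ∈ W) {f : G → ℂ} (hf : f ∈ W)
    {ψ : AddChar G ℂ} (hψ : (complexBasis G).repr f ψ ≠ 0) : ⇑ψ ∈ W := by
  have h := W.sum_mem (t := Finset.univ) fun v _ => W.smul_mem (ψ (-v)) (hW v f hf)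
  rw [sum_smul_translate] at h
  exact (W.smul_mem_iff (mul_ne_zero (Nat.cast_ne_zero.2 Fintype.card_ne_zero) hψ)).1 h

lemma exists_coe_mem_of_le_span {W : Submodule ℂ (G → ℂ)}
    (hW : ∀ v, ∀ f ∈ W, (fun x => f (v + x)) ∈ W) {S : Set (AddChar G ℂ)}
    (hWS : W ≤ Submodule.span ℂ ((⇑) '' S)) (hW₀ : W ≠ ⊥) : ∃ ψ ∈ S, ⇑ψ ∈ W := by
  obtain ⟨f, hfW, hf₀⟩ := W.exists_mem_ne_zero_of_ne_bot hW₀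
  obtain ⟨ψ, hψ⟩ : ∃ ψ, (complexBasis G).repr f ψ ≠ 0 := by
    by_contra! h
    exact hf₀ ((complexBasis G).repr.map_eq_zero_iff.1 (Finsupp.ext h))
  have hsupp := (complexBasis G).mem_span_image.1 (by rw [coe_complexBasis]; exact hWS hfW)
  exact ⟨ψ, hsupp (Finsupp.mem_support_iff.2 hψ), coe_mem_of_repr_ne_zero hW hfW hψ⟩

end AddChar

section HammingNorm

variable {ι : Type*} [Fintype ι]

lemma hammingNorm_comp_perm {β : Type*} [Zero β] [DecidableEq β] (y : ι → β)
    (σ : Equiv.Perm ι) : hammingNorm (y ∘ σ) = hammingNorm y := by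
  simp only [hammingNorm, ← Fintype.card_subtype]
  exact Fintype.card_congr (σ.subtypeEquiv fun _ => Iff.rfl)

lemma exists_perm_comp_eq_of_hammingNorm_eq [DecidableEq ι] {y y' : ι → ZMod 2}
    (h : hammingNorm y = hammingNorm y') : ∃ σ : Equiv.Perm ι, y ∘ σ = y' := by
  have hfiber : ∀ c : ZMod 2, Fintype.card {i // y' i = c} = Fintype.card {i // y i = c} := by
    have hone : ∀ a : ZMod 2, a = 1 ↔ a ≠ 0 := by decide
    have hcompl := fun z : ι → ZMod 2 =>
      Finset.card_filter_add_card_filter_not (s := Finset.univ) fun i => z i = 0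
    simp only [hammingNorm, ← ne_eq] at h hcompl
    intro c
    simp only [Fintype.card_subtype]
    rcases eq_or_ne c 0 with rfl | hc
    · have := hcompl y
      have := hcompl y'
      omega
    · simp only [(hone c).2 hc, hone]
      exact h.symm
  exact ⟨Equiv.ofFiberEquiv fun c => Fintype.equivOfCardEq (hfiber c),
    funext (Equiv.ofFiberEquiv_map _)⟩

end HammingNorm

section HammingCube

variable {n k : ℕ}

lemma hammingCharacter_eq_neg_one_pow_dotProduct (y x : Fin n → ZMod 2) :
    hammingCharacter n y x = (-1) ^ (y ⬝ᵥ x).val := by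
  have h : ((∑ i, (y i).val * (x i).val : ℕ) : ZMod 2) = y ⬝ᵥ x := by
    push_cast [ZMod.natCast_val, ZMod.cast_id]
    rfl
  rw [hammingCharacter, neg_one_pow_eq_pow_mod_two, ← h, ZMod.val_natCast]

variable (n) in
noncomputable def hammingAddChar (y : Fin n → ZMod 2) : AddChar (Fin n → ZMod 2) ℂ where
  toFun := hammingCharacter n y
  map_zero_eq_one' := by simp [hammingCharacter_eq_neg_one_pow_dotProduct]
  map_add_eq_mul' a b := by
    simp only [hammingCharacter_eq_neg_one_pow_dotProduct, dotProduct_add]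
    rw [ZMod.val_add, ← neg_one_pow_eq_pow_mod_two, pow_add]

lemma hammingCharacter_comp_perm (y x : Fin n → ZMod 2) (σ : Equiv.Perm (Fin n)) :
    hammingCharacter n y (x ∘ σ) = hammingCharacter n (y ∘ σ.symm) x := by
  simp only [hammingCharacter, Function.comp_apply]
  rw [← Equiv.sum_comp σ fun i => (y (σ.symm i)).val * (x i).val]
  simp

lemma hammingCharacter_mem_cubeH {y : Fin n → ZMod 2} (hy : hammingNorm y = k) :
    hammingCharacter n y ∈ cubeH n k :=
  Submodule.subset_span ⟨y, hy, rfl⟩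

variable (n k) in
lemma cubeH_eq_span :
    cubeH n k = Submodule.span ℂ ((⇑) '' (hammingAddChar n '' {y | hammingNorm y = k})) := by
  rw [cubeH, Set.image_image]
  congr 1
  ext f
  simp [hammingAddChar, eq_comm]

lemma comp_mem_cubeH {g : (Fin n → ZMod 2) → Fin n → ZMod 2}
    (hg : ∀ y, hammingNorm y = k → hammingCharacter n y ∘ g ∈ cubeH n k)
    {f : (Fin n → ZMod 2) → ℂ} (hf : f ∈ cubeH n k) : f ∘ g ∈ cubeH n k := by
  have : cubeH n k ≤ (cubeH n k).comap (LinearMap.funLeft ℂ ℂ g) :=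
    Submodule.span_le.2 fun _ ⟨y, hy, hf⟩ => hf ▸ hg y hy
  exact this hf

lemma comp_perm_mem_cubeH (σ : Equiv.Perm (Fin n)) {f : (Fin n → ZMod 2) → ℂ}
    (hf : f ∈ cubeH n k) : (fun x => f (x ∘ σ)) ∈ cubeH n k := by
  refine comp_mem_cubeH (g := (· ∘ σ)) (fun y hy => ?_) hf
  have : hammingCharacter n y ∘ (· ∘ σ) = hammingCharacter n (y ∘ σ.symm) :=
    funext fun x => hammingCharacter_comp_perm y x σ
  rw [this]
  exact hammingCharacter_mem_cubeH (by rw [hammingNorm_comp_perm, hy])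

lemma translate_mem_cubeH (v : Fin n → ZMod 2) {f : (Fin n → ZMod 2) → ℂ}
    (hf : f ∈ cubeH n k) : (fun x => f (v + x)) ∈ cubeH n k := by
  refine comp_mem_cubeH (g := (v + ·)) (fun y hy => ?_) hf
  have : hammingCharacter n y ∘ (v + ·) = hammingCharacter n y v • hammingCharacter n y :=
    funext fun x => AddChar.map_add_eq_mul (hammingAddChar n y) v x
  rw [this]
  exact Submodule.smul_mem _ _ (hammingCharacter_mem_cubeH hy)

lemma comp_inv_mem_cubeH {u : Equiv.Perm (Fin n → ZMod 2)} (hu : u ∈ cubeAut n)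
    {f : (Fin n → ZMod 2) → ℂ} (hf : f ∈ cubeH n k) : (fun x => f (u⁻¹ x)) ∈ cubeH n k := by
  induction hu using Subgroup.closure_induction'' generalizing f with
  | mem u hu =>
    rcases hu with ⟨σ, rfl⟩ | ⟨v, rfl⟩
    · exact comp_perm_mem_cubeH σ hf
    · simpa using translate_mem_cubeH (-v) hf
  | inv_mem u hu =>
    rcases hu with ⟨σ, rfl⟩ | ⟨v, rfl⟩
    · exact comp_perm_mem_cubeH σ.symm hf
    · simpa using translate_mem_cubeH v hf
  | one => exact hf
  | mul a b _ _ ha hb => exact ha (hb hf)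

variable {W : Submodule ℂ ((Fin n → ZMod 2) → ℂ)}

lemma translate_mem_of_cubeAut_invariant
    (hW : ∀ u ∈ cubeAut n, ∀ f ∈ W, (fun x => f (u⁻¹ x)) ∈ W) (v : Fin n → ZMod 2) {f : (Fin n → ZMod 2) → ℂ}
    (hf : f ∈ W) : (fun x => f (v + x)) ∈ W := by
  simpa using hW _ (Subgroup.subset_closure (Or.inr ⟨-v, rfl⟩)) f hf

lemma hammingCharacter_mem_of_cubeAut_invariant
    (hW : ∀ u ∈ cubeAut n, ∀ f ∈ W, (fun x => f (u⁻¹ x)) ∈ W) {y y' : Fin n → ZMod 2}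
    (h : hammingNorm y = hammingNorm y') (hy : hammingCharacter n y ∈ W) :
    hammingCharacter n y' ∈ W := by
  obtain ⟨σ, rfl⟩ := exists_perm_comp_eq_of_hammingNorm_eq h
  convert hW _ (Subgroup.subset_closure (Or.inl ⟨σ.symm, rfl⟩)) _ hy using 1
  exact funext fun x => (hammingCharacter_comp_perm y x σ.symm).symm

end HammingCube

theorem cubeH_invariant_and_irreducible_general (n k : ℕ) :
    (∀ u ∈ cubeAut n, ∀ f ∈ cubeH n k,
      (fun x => f (u⁻¹ x)) ∈ cubeH n k) ∧
    (∀ W : Submodule ℂ ((Fin n → ZMod 2) → ℂ), W ≤ cubeH n k →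
      (∀ u ∈ cubeAut n, ∀ f ∈ W, (fun x => f (u⁻¹ x)) ∈ W) →
      W = ⊥ ∨ W = cubeH n k) := by
  refine ⟨fun u hu f hf => comp_inv_mem_cubeH hu hf, fun W hWH hW => ?_⟩
  refine (eq_or_ne W ⊥).imp_right fun hW₀ => hWH.antisymm ?_
  obtain ⟨_, ⟨y, hy, rfl⟩, hyW⟩ :=
    AddChar.exists_coe_mem_of_le_span (fun v _ => translate_mem_of_cubeAut_invariant hW v)
      (hWH.trans (cubeH_eq_span n k).le) hW₀
  exact Submodule.span_le.2 fun _ ⟨y', hy', hf⟩ =>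
    hf ▸ hammingCharacter_mem_of_cubeAut_invariant hW (hy.trans hy'.symm) hyW

/-- each `H_k ⊆ C({0,1}^n)` is invariant under the action
`(u f)(x) = f(u⁻¹ x)` of `Aut({0,1}^n)`, and is `Aut({0,1}^n)`-irreducible. -/
theorem cubeH_invariant_and_irreducible (n k : ℕ) (hk : k ≤ n) :
    (∀ u ∈ cubeAut n, ∀ f ∈ cubeH n k,
      (fun x => f (u⁻¹ x)) ∈ cubeH n k) ∧
    (∀ W : Submodule ℂ ((Fin n → ZMod 2) → ℂ), W ≤ cubeH n k →
      (∀ u ∈ cubeAut n, ∀ f ∈ W, (fun x => f (u⁻¹ x)) ∈ W) →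
      W = ⊥ ∨ W = cubeH n k) :=
  cubeH_invariant_and_irreducible_general n k
end

section
/- Let n ≥ 0 and let K : {0,1}^n × {0,1}^n → ℂ be a Hermitian positive kernel (every finite matrix extracted from K is positive semidefinite) that is Aut({0,1}^n)-invariant, i.e. K(ux, uy) = K(x,y) for all u ∈ Aut({0,1}^n) and x, y ∈ {0,1}^n. Then there exist nonnegative real numbers f_0, …, f_n such that K(x,y) = Σ_{k=0}^{n} f_k K^n_k(δ(x,y)) for all x, y ∈ {0,1}^n. -/
open scoped ComplexConjugate ComplexOrder

/-- The Krawtchouk polynomial `K^n_k(t) = ∑_{i=0}^k (-1)^i binom(t,i) binom(n-t,k-i)`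
evaluated at the integer `t`. -/
def krawtchouk (n k t : ℕ) : ℤ :=
  ∑ i ∈ Finset.range (k + 1), (-1 : ℤ) ^ i * (t.choose i) * ((n - t).choose (k - i))

/-!
Translation invariance gives `K (x, y) = F (x + y)` with `F z = K (0, z)`, so the Walsh characters
`w_A(z) = (-1)^{∑_{i ∈ A} z_i}` are eigenvectors of `K`, and positivity of `K` tested against `w_A`
says that the Walsh coefficient `F̂(A) = ∑_z F z w_A(z)` is nonnegative. Invariance under coordinate
permutations makes `F̂(A)` depend only on `#A`, while summing `w_A(z)` over the sets `A` of size `k`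
gives `K^n_k(|z|)`. Walsh inversion `2^n F = ∑_A F̂(A) w_A` turns this into the Krawtchouk expansion.
-/

open Finset
open scoped Pointwise

section Krawtchouk

variable {α : Type*} [Fintype α] [DecidableEq α]

theorem card_filter_card_inter_eq (T : Finset α) {i k : ℕ} (hik : i ≤ k) :
    #{A ∈ powersetCard k univ | #(A ∩ T) = i} = (#T).choose i * (#Tᶜ).choose (k - i) := by
  rw [← card_powersetCard i T, ← card_powersetCard (k - i) Tᶜ, ← card_product]
  refine card_nbij' (fun A => (A ∩ T, A \ T)) (fun p => p.1 ∪ p.2) ?_ ?_ ?_ ?_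
  · intro A hA
    simp only [coe_filter, mem_powersetCard_univ, Set.mem_ofPred_eq] at hA
    simp only [coe_product, Set.mem_prod, mem_coe, mem_powersetCard, inter_subset_right, true_and]
    have := card_inter_add_card_sdiff A T
    exact ⟨hA.2, by grind [mem_compl], by omega⟩
  · rintro ⟨B, C⟩ hBC
    simp only [coe_product, Set.mem_prod, mem_coe, mem_powersetCard] at hBC
    obtain ⟨⟨hB, rfl⟩, hC, hCk⟩ := hBC
    have hdisj : Disjoint B C := disjoint_of_subset_left hB (subset_compl_iff_disjoint_left.1 hC)
    have hinter : (B ∪ C) ∩ T = B := by grind [mem_compl]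
    simp only [coe_filter, mem_powersetCard_univ, Set.mem_ofPred_eq, hinter, and_true,
      card_union_of_disjoint hdisj]
    omega
  · intro A _
    exact sup_inf_sdiff A T
  · rintro ⟨B, C⟩ hBC
    simp only [coe_product, Set.mem_prod, mem_coe, mem_powersetCard] at hBC
    ext x <;> grind [mem_compl]

theorem sum_powersetCard_neg_one_pow_card_inter (k : ℕ) (T : Finset α) :
    ∑ A ∈ powersetCard k univ, (-1 : ℤ) ^ #(A ∩ T) = krawtchouk (Fintype.card α) k #T := by
  have hmaps : ∀ A ∈ powersetCard k (univ : Finset α), #(A ∩ T) ∈ range (k + 1) := fun A hA =>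
    mem_range_succ_iff.2 ((card_le_card inter_subset_left).trans (mem_powersetCard.1 hA).2.le)
  rw [← sum_fiberwise_of_maps_to hmaps, krawtchouk]
  refine sum_congr rfl fun i hi => ?_
  rw [sum_congr rfl fun A hA => by rw [(mem_filter.1 hA).2], sum_const,
    card_filter_card_inter_eq T (mem_range_succ_iff.1 hi), card_compl, nsmul_eq_mul]
  push_cast
  ring

end Krawtchouk

section Walsh

variable {ι R : Type*} [CommRing R]

def walsh (A : Finset ι) (z : ι → ZMod 2) : ℤ := ∏ i ∈ A, (-1) ^ (z i).val

theorem walsh_add (A : Finset ι) (z w : ι → ZMod 2) :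
    walsh A (z + w) = walsh A z * walsh A w := by
  have key : ∀ a b : ZMod 2, (-1 : ℤ) ^ (a + b).val = (-1) ^ a.val * (-1) ^ b.val := by decide
  simp only [walsh, Pi.add_apply, key, prod_mul_distrib]

theorem walsh_smul [DecidableEq ι] (σ : Equiv.Perm ι) (A : Finset ι) (z : ι → ZMod 2) :
    walsh (σ • A) z = walsh A (z ∘ σ) := by
  rw [walsh, smul_finset_def, prod_image (MulAction.injective σ).injOn]
  rfl

variable [Fintype ι]

theorem sum_walsh (z : ι → ZMod 2) :
    ∑ A, walsh A z = if z = 0 then 2 ^ Fintype.card ι else 0 := by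
  have key : ∀ a : ZMod 2, 1 + (-1 : ℤ) ^ a.val = if a = 0 then 2 else 0 := by decide
  simp only [walsh, ← powerset_univ, ← prod_one_add, key, Fintype.prod_ite_zero, prod_const,
    card_univ, funext_iff, Pi.zero_apply]

variable [DecidableEq ι]

theorem walsh_eq_neg_one_pow (A : Finset ι) (z : ι → ZMod 2) :
    walsh A z = (-1) ^ #(A ∩ ({i | z i ≠ 0} : Finset ι)) := by
  have key : ∀ a : ZMod 2, (-1 : ℤ) ^ a.val = if a ≠ 0 then -1 else 1 := by decide
  rw [walsh, inter_filter, inter_univ]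
  simp only [key, prod_ite, prod_const_one, mul_one, prod_const]

theorem sum_powersetCard_walsh (k : ℕ) (z : ι → ZMod 2) :
    ∑ A ∈ powersetCard k univ, walsh A z = krawtchouk (Fintype.card ι) k (hammingNorm z) := by
  simp_rw [walsh_eq_neg_one_pow]
  exact sum_powersetCard_neg_one_pow_card_inter k _

def walshCoeff (F : (ι → ZMod 2) → R) (A : Finset ι) : R :=
  ∑ z, F z * walsh A z

theorem sum_walshCoeff_mul_walsh (F : (ι → ZMod 2) → R)
    (z : ι → ZMod 2) :
    ∑ A, walshCoeff F A * walsh A z = 2 ^ Fintype.card ι * F z := by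
  have hz (w : ι → ZMod 2) : w + z = 0 ↔ w = z := by
    rw [add_eq_zero_iff_eq_neg, ZModModule.neg_eq_self]
  simp_rw [walshCoeff, sum_mul, mul_assoc]
  rw [sum_comm]
  simp_rw [← mul_sum, ← Int.cast_mul, ← walsh_add, ← Int.cast_sum, sum_walsh, hz]
  simp [mul_comm]

theorem sum_mul_walsh_eq_sum_krawtchouk {N : ℕ}
    (hN : Fintype.card ι = N) {c : Finset ι → R} (hc : ∀ A B, #A = #B → c A = c B)
    {rep : Fin (N + 1) → Finset ι} (hrep : ∀ k, #(rep k) = k) (z : ι → ZMod 2) :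
    ∑ A, c A * walsh A z = ∑ k : Fin (N + 1), c (rep k) * krawtchouk N k (hammingNorm z) := by
  subst hN
  rw [← powerset_univ, sum_powerset, card_univ, ← Fin.sum_univ_eq_sum_range]
  refine sum_congr rfl fun k _ => ?_
  rw [← sum_powersetCard_walsh, Int.cast_sum, mul_sum]
  refine sum_congr rfl fun A hA => ?_
  rw [hc A (rep k) ((mem_powersetCard.1 hA).2.trans (hrep k).symm)]

theorem walshCoeff_nonneg {F : (ι → ZMod 2) → ℂ}
    (hF : ∀ u : (ι → ZMod 2) → ℂ, 0 ≤ ∑ a, ∑ b, F (a + b) * u a * conj (u b))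
    (A : Finset ι) : 0 ≤ walshCoeff F A := by
  have hsum : ∑ a, ∑ b, F (a + b) * walsh A a * conj (walsh A b : ℂ) =
      2 ^ Fintype.card ι * walshCoeff F A := by
    have hinner (a : ι → ZMod 2) : ∑ b, F (a + b) * walsh A (a + b) = walshCoeff F A :=
      Equiv.sum_comp (Equiv.addLeft a) fun z => F z * walsh A z
    simp_rw [map_intCast, mul_assoc, ← Int.cast_mul, ← walsh_add, hinner, sum_const, card_univ,
      Fintype.card_fun, ZMod.card, nsmul_eq_mul, Nat.cast_pow, Nat.cast_ofNat]
  have h2 : (0 : ℂ) < 2 ^ Fintype.card ι := by positivity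
  have h := mul_nonneg (inv_nonneg.2 h2.le) (hsum ▸ hF fun a => walsh A a)
  rwa [inv_mul_cancel_left₀ h2.ne'] at h

theorem walshCoeff_smul {F : (ι → ZMod 2) → R}
    (hF : ∀ (σ : Equiv.Perm ι) z, F (z ∘ σ) = F z) (σ : Equiv.Perm ι) (A : Finset ι) :
    walshCoeff F (σ • A) = walshCoeff F A := by
  simp only [walshCoeff, walsh_smul]
  exact Fintype.sum_equiv (σ.symm.arrowCongr (Equiv.refl _)) _ _ fun z => by rw [← hF σ z]; rfl

theorem walshCoeff_eq_of_card_eq {F : (ι → ZMod 2) → R}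
    (hF : ∀ (σ : Equiv.Perm ι) z, F (z ∘ σ) = F z) {A B : Finset ι} (h : #A = #B) :
    walshCoeff F A = walshCoeff F B := by
  have := Set.powersetCard.isPretransitive (α := ι) (n := #A)
  obtain ⟨σ, hσ⟩ := MulAction.exists_smul_eq (Equiv.Perm ι)
    (⟨A, rfl⟩ : Set.powersetCard ι #A) ⟨B, h.symm⟩
  obtain rfl : σ • A = B := by simpa using congrArg Subtype.val hσ
  exact (walshCoeff_smul hF σ A).symm

end Walsh

theorem sum_sum_nonneg_of_forall_fin {V : Type*} [Fintype V] {K : V × V → ℂ}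
    (hpos : ∀ (m : ℕ) (x : Fin m → V) (u : Fin m → ℂ),
      0 ≤ ∑ i : Fin m, ∑ j : Fin m, K (x i, x j) * u i * conj (u j))
    (u : V → ℂ) : 0 ≤ ∑ a, ∑ b, K (a, b) * u a * conj (u b) := by
  let e := (Fintype.equivFin V).symm
  calc 0 ≤ _ := hpos _ e (u ∘ e)
    _ = _ := Fintype.sum_equiv e _ (fun a => ∑ b, K (a, b) * u a * conj (u b)) fun _ =>
      Fintype.sum_equiv e _ _ fun _ => rfl

theorem addLeft_mem_cubeAut {n : ℕ} (v : Fin n → ZMod 2) : Equiv.addLeft v ∈ cubeAut n :=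
  Subgroup.subset_closure (Or.inr ⟨v, rfl⟩)

theorem arrowCongr_mem_cubeAut {n : ℕ} (σ : Equiv.Perm (Fin n)) :
    σ.arrowCongr (Equiv.refl (ZMod 2)) ∈ cubeAut n :=
  Subgroup.subset_closure (Or.inl ⟨σ, rfl⟩)

theorem cube_bochner_general (n : ℕ)
    (K : (Fin n → ZMod 2) × (Fin n → ZMod 2) → ℂ)
    (hpos : ∀ (m : ℕ) (x : Fin m → Fin n → ZMod 2) (u : Fin m → ℂ),
      0 ≤ ∑ i : Fin m, ∑ j : Fin m, K (x i, x j) * u i * conj (u j))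
    (hinv : ∀ u ∈ cubeAut n, ∀ x y, K (u x, u y) = K (x, y)) :
    ∃ f : Fin (n + 1) → ℝ, (∀ k, 0 ≤ f k) ∧
      ∀ x y, K (x, y) =
        ∑ k : Fin (n + 1), (f k : ℂ) * (krawtchouk n k (hammingDist x y) : ℂ) := by
  set F : (Fin n → ZMod 2) → ℂ := fun z => K (0, z)
  have hK (x y : Fin n → ZMod 2) : K (x, y) = F (x + y) := by
    simpa [← add_assoc, ZModModule.add_self] using hinv _ (addLeft_mem_cubeAut x) 0 (x + y)
  have hF (σ : Equiv.Perm (Fin n)) (z : Fin n → ZMod 2) : F (z ∘ σ) = F z := by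
    simpa [Equiv.arrowCongr] using hinv _ (arrowCongr_mem_cubeAut σ.symm) 0 z
  have hcoeff : ∀ A, 0 ≤ walshCoeff F A :=
    walshCoeff_nonneg (by simpa only [hK] using sum_sum_nonneg_of_forall_fin hpos)
  choose rep hrep using fun k : Fin (n + 1) =>
    exists_subset_card_eq (s := (univ : Finset (Fin n))) (by simpa using k.is_le)
  refine ⟨fun k => (walshCoeff F (rep k)).re / 2 ^ n,
    fun k => div_nonneg (Complex.le_def.1 (hcoeff _)).1 (by positivity), fun x y => ?_⟩
  have hre (A) : ((walshCoeff F A).re : ℂ) = walshCoeff F A :=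
    (Complex.eq_re_of_ofReal_le (by rw [Complex.ofReal_zero]; exact hcoeff A)).symm
  have hcard := Fintype.card_fin n
  have hdist : hammingDist x y = hammingNorm (x + y) := by
    rw [hammingDist_eq_hammingNorm, ZModModule.neg_eq_self]
  calc K (x, y) = (2 ^ n)⁻¹ * ∑ A, walshCoeff F A * walsh A (x + y) := by
        rw [sum_walshCoeff_mul_walsh, hcard, hK, inv_mul_cancel_left₀ (by positivity)]
    _ = _ := by
        rw [sum_mul_walsh_eq_sum_krawtchouk hcard (fun _ _ => walshCoeff_eq_of_card_eq hF)
          (fun k => (hrep k).2), mul_sum, hdist]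
        refine sum_congr rfl fun k _ => ?_
        push_cast [hre]
        ring

/-- Bochner characterization on the Hamming cube: every Hermitian,
positive, `Aut({0,1}^n)`-invariant kernel `K` on the Hamming cube is of the form
`K(x,y) = ∑_{k=0}^n f_k K^n_k(δ(x,y))` with nonnegative reals `f_0, …, f_n`. -/
theorem cube_bochner (n : ℕ)
    (K : (Fin n → ZMod 2) × (Fin n → ZMod 2) → ℂ)
    (hherm : ∀ x y, K (x, y) = conj (K (y, x)))
    (hpos : ∀ (m : ℕ) (x : Fin m → Fin n → ZMod 2) (u : Fin m → ℂ),
      0 ≤ ∑ i : Fin m, ∑ j : Fin m, K (x i, x j) * u i * conj (u j))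
    (hinv : ∀ u ∈ cubeAut n, ∀ x y, K (u x, u y) = K (x, y)) :
    ∃ f : Fin (n + 1) → ℝ, (∀ k, 0 ≤ f k) ∧
      ∀ x y, K (x, y) =
        ∑ k : Fin (n + 1), (f k : ℂ) * (krawtchouk n k (hammingDist x y) : ℂ) :=
  cube_bochner_general n K hpos hinv
end

section
/- Let n ≥ 1 and d ≥ 0. The Laplace operator Δ maps Pol_{=d}(ℂ^n) onto Pol_{=d−2}(ℂ^n), and the space Harm_d = {f ∈ Pol_{=d}(ℂ^n) : Δ f = 0} of harmonic homogeneous polynomials of degree d has complex dimension h_d = binom(n+d−1, n−1) − binom(n+d−3, n−1), where the second binomial coefficient is taken to be 0 when n + d − 3 < n − 1. -/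
open MvPolynomial

/-- The Laplace operator `Δ = ∑ i ∂²/∂x_i²` on polynomials in `n` variables. -/
noncomputable def polyLaplacian (n : ℕ) :
    MvPolynomial (Fin n) ℂ →ₗ[ℂ] MvPolynomial (Fin n) ℂ :=
  ∑ i : Fin n, ((pderiv i).toLinearMap ∘ₗ (pderiv i).toLinearMap)

/-- `Harm_d`: the space of harmonic homogeneous polynomials of degree `d`
in `n` variables over `ℂ`. -/
noncomputable def harmSubmodule (n d : ℕ) : Submodule ℂ (MvPolynomial (Fin n) ℂ) :=
  homogeneousSubmodule (Fin n) ℂ d ⊓ LinearMap.ker (polyLaplacian n)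

/-!
Multiplication by `X i` is adjoint to `∂/∂X i` for the Fischer pairing, hence multiplication by
`q = ∑ X i ^ 2` is adjoint to `Δ`. The Fischer pairing is nondegenerate on each space of
homogeneous polynomials and multiplication by `q ≠ 0` is injective, so its adjoint
`Δ : Pol_{=e+2} → Pol_{=e}` is surjective; rank–nullity then gives
`dim Harm_{e+2} = dim Pol_{=e+2} - dim Pol_{=e}`. In degrees `d < 2`, `Δ` vanishes on `Pol_{=d}`.
-/

open Module Finsupp Nat

theorem LinearMap.IsAdjointPair.surjective_of_injective {K M M₁ : Type*} [Field K]
    [AddCommGroup M] [Module K M] [FiniteDimensional K M] [AddCommGroup M₁] [Module K M₁]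
    {B : M →ₗ[K] M →ₗ[K] K} {B' : M₁ →ₗ[K] M₁ →ₗ[K] K} {f : M →ₗ[K] M₁} {g : M₁ →ₗ[K] M}
    (h : IsAdjointPair B B' f g) (hB : Function.Injective B) (hB' : Function.Injective B')
    (hf : Function.Injective f) : Function.Surjective g := by
  have hB_surj : Function.Surjective B :=
    (injective_iff_surjective_of_finrank_eq_finrank Subspace.dual_finrank_eq.symm).mp hB
  have hcomp : g.dualMap ∘ B = B' ∘ f := funext fun x => LinearMap.ext fun y => (h x y).symm
  rw [← dualMap_injective_iff]
  exact Function.Injective.of_comp_right (hcomp ▸ hB'.comp hf) hB_surj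

theorem Finsupp.setOf_degree_eq_coe_finsuppAntidiag {σ : Type*} [Fintype σ] [DecidableEq σ]
    (d : ℕ) :
    {s : σ →₀ ℕ | s.degree = d} = ↑(Finset.univ.finsuppAntidiag d : Finset (σ →₀ ℕ)) := by
  ext s
  simp [degree_eq_sum]

theorem Finsupp.prod_factorial_add_single {σ : Type*} [Fintype σ] (s : σ →₀ ℕ) (i : σ) :
    ∏ j, ((s + single i 1 : σ →₀ ℕ) j)! = (s i + 1) * ∏ j, (s j)! := by
  classical
  have h : ∀ j, ((s + single i 1 : σ →₀ ℕ) j)! = (if j = i then s i + 1 else 1) * (s j)! := by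
    intro j
    obtain rfl | hj := eq_or_ne j i
    · simp [factorial_succ]
    · simp [hj]
  simp only [h, Finset.prod_mul_distrib, Finset.prod_ite_eq', Finset.mem_univ, if_true]

namespace MvPolynomial

section Homogeneous

variable {σ : Type*}

instance {R : Type*} [CommSemiring R] [Finite σ] (d : ℕ) :
    Module.Finite R (homogeneousSubmodule σ R d) :=
  Module.Finite.iff_fg.mpr (homogeneousSubmodule_fg σ R d)

theorem finrank_homogeneousSubmodule [Fintype σ] (K : Type*) [Field K] (d : ℕ) :
    finrank K (homogeneousSubmodule σ K d) = (Fintype.card σ + d - 1).choose d := by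
  classical
  rw [homogeneousSubmodule_eq_finsupp_supported, setOf_degree_eq_coe_finsuppAntidiag,
    (AddMonoidAlgebra.supportedEquivFinsupp _).finrank_eq, finrank_finsupp_self]
  simp [Finset.card_finsuppAntidiag_nat_eq_choose]

end Homogeneous

section Fischer

variable (σ K : Type*) [Fintype σ] [CommRing K]

/-- The Fischer pairing `⟨f, g⟩ = ∑ₛ s! f_s g_s`, where `s! = ∏ᵢ (sᵢ)!`. -/
noncomputable def fischerPairing : MvPolynomial σ K →ₗ[K] MvPolynomial σ K →ₗ[K] K :=
  (basisMonomials σ K).constr K fun s => ((∏ i, (s i)! : ℕ) : K) • lcoeff K s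

variable {σ K}

theorem fischerPairing_monomial (s : σ →₀ ℕ) (a : K) (g : MvPolynomial σ K) :
    fischerPairing σ K (monomial s a) g = (∏ i, (s i)! : ℕ) * a * coeff s g := by
  have h : monomial s a = a • basisMonomials σ K s := by
    rw [coe_basisMonomials, smul_monomial, smul_eq_mul, mul_one]
  rw [h, map_smul, fischerPairing, Module.Basis.constr_basis]
  simp only [LinearMap.smul_apply, lcoeff_apply, smul_eq_mul]
  ring

theorem fischerPairing_apply_monomial (f : MvPolynomial σ K) (t : σ →₀ ℕ) (b : K) :
    fischerPairing σ K f (monomial t b) = (∏ i, (t i)! : ℕ) * coeff t f * b := by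
  classical
  induction f using MvPolynomial.induction_on' with
  | monomial s a =>
    rw [fischerPairing_monomial, coeff_monomial, coeff_monomial]
    obtain rfl | hst := eq_or_ne s t
    · simp
    · simp [hst, hst.symm]
  | add p q hp hq => simp only [map_add, LinearMap.add_apply, hp, hq, coeff_add]; ring

theorem fischerPairing_X_mul (i : σ) (f g : MvPolynomial σ K) :
    fischerPairing σ K (X i * f) g = fischerPairing σ K f (pderiv i g) := by
  classical
  induction f using MvPolynomial.induction_on' with
  | monomial s a =>
    rw [← pow_one (X i), ← monomial_single_add, fischerPairing_monomial,
      fischerPairing_monomial, coeff_pderiv, add_comm, prod_factorial_add_single]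
    push_cast
    ring
  | add p q hp hq => simp only [mul_add, map_add, LinearMap.add_apply, hp, hq]

variable (σ K) in
noncomputable def homogeneousFischerPairing (d : ℕ) :
    homogeneousSubmodule σ K d →ₗ[K] homogeneousSubmodule σ K d →ₗ[K] K :=
  (fischerPairing σ K).compl₁₂ (homogeneousSubmodule σ K d).subtype
    (homogeneousSubmodule σ K d).subtype

theorem homogeneousFischerPairing_injective [NoZeroDivisors K] [CharZero K] (d : ℕ) :
    Function.Injective (homogeneousFischerPairing σ K d) := by
  rw [← LinearMap.ker_eq_bot, LinearMap.ker_eq_bot']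
  rintro ⟨f, hf⟩ hf0
  ext t
  by_cases ht : t.degree = d
  · have h := LinearMap.congr_fun hf0 ⟨monomial t 1, isHomogeneous_monomial 1 ht⟩
    simp only [homogeneousFischerPairing, LinearMap.compl₁₂_apply, Submodule.coe_subtype,
      fischerPairing_apply_monomial, mul_one, LinearMap.zero_apply] at h
    have hweight : ((∏ i, (t i)! : ℕ) : K) ≠ 0 :=
      Nat.cast_ne_zero.mpr (Finset.prod_pos fun i _ => factorial_pos _).ne'
    exact (mul_eq_zero.mp h).resolve_left hweight
  · exact ((mem_homogeneousSubmodule d f).mp hf).coeff_eq_zero ht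

end Fischer

end MvPolynomial

section Laplacian

variable {n : ℕ}

theorem polyLaplacian_apply (f : MvPolynomial (Fin n) ℂ) :
    polyLaplacian n f = ∑ i, pderiv i (pderiv i f) := by
  simp [polyLaplacian]

theorem isHomogeneous_polyLaplacian {f : MvPolynomial (Fin n) ℂ} {e : ℕ}
    (hf : f.IsHomogeneous (e + 2)) : (polyLaplacian n f).IsHomogeneous e := by
  rw [polyLaplacian_apply]
  exact IsHomogeneous.sum _ _ _ fun i _ => by simpa using hf.pderiv.pderiv (i := i)

theorem polyLaplacian_eq_zero_of_isHomogeneous_of_lt_two {f : MvPolynomial (Fin n) ℂ} {d : ℕ}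
    (hd : d < 2) (hf : f.IsHomogeneous d) : polyLaplacian n f = 0 := by
  rw [polyLaplacian_apply]
  refine Finset.sum_eq_zero fun i _ => ?_
  have hconst : (pderiv i f).totalDegree = 0 :=
    (totalDegree_zero_iff_isHomogeneous _).mpr <| by
      simpa [show d - 1 = 0 by omega] using hf.pderiv
  rw [totalDegree_eq_zero_iff_eq_C.mp hconst, pderiv_C]

theorem fischerPairing_sum_X_sq_mul (f g : MvPolynomial (Fin n) ℂ) :
    fischerPairing (Fin n) ℂ ((∑ i, X i ^ 2) * f) g =
      fischerPairing (Fin n) ℂ f (polyLaplacian n g) := by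
  simp only [Finset.sum_mul, map_sum, LinearMap.sum_apply, polyLaplacian_apply, pow_two, mul_assoc,
    fischerPairing_X_mul]

theorem isHomogeneous_sum_X_sq : (∑ i, X i ^ 2 : MvPolynomial (Fin n) ℂ).IsHomogeneous 2 :=
  IsHomogeneous.sum _ _ _ fun i _ => isHomogeneous_X_pow i 2

theorem sum_X_sq_ne_zero (hn : 1 ≤ n) : (∑ i, X i ^ 2 : MvPolynomial (Fin n) ℂ) ≠ 0 := by
  intro h
  have := congrArg (eval fun _ => (1 : ℂ)) h
  simp only [map_sum, map_pow, eval_X, one_pow, Finset.sum_const, Finset.card_univ,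
    Fintype.card_fin, nsmul_eq_mul, mul_one, map_zero, cast_eq_zero] at this
  omega

variable (n) in
noncomputable def laplacianHom (e : ℕ) :
    homogeneousSubmodule (Fin n) ℂ (e + 2) →ₗ[ℂ] homogeneousSubmodule (Fin n) ℂ e :=
  (polyLaplacian n).restrict fun _ hf => (mem_homogeneousSubmodule _ _).mpr <|
    isHomogeneous_polyLaplacian ((mem_homogeneousSubmodule _ _).mp hf)

variable (n) in
noncomputable def mulSumXSqHom (e : ℕ) :
    homogeneousSubmodule (Fin n) ℂ e →ₗ[ℂ] homogeneousSubmodule (Fin n) ℂ (e + 2) :=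
  (LinearMap.mulLeft ℂ (∑ i, X i ^ 2)).restrict fun _ hf => by
    simpa [add_comm] using isHomogeneous_sum_X_sq.mul hf

theorem mulSumXSqHom_injective (hn : 1 ≤ n) (e : ℕ) : Function.Injective (mulSumXSqHom n e) :=
  fun _ _ h => Subtype.ext <| mul_left_cancel₀ (sum_X_sq_ne_zero hn) (congrArg Subtype.val h)

theorem isAdjointPair_mulSumXSqHom_laplacianHom (e : ℕ) :
    LinearMap.IsAdjointPair (homogeneousFischerPairing (Fin n) ℂ e)
      (homogeneousFischerPairing (Fin n) ℂ (e + 2)) (mulSumXSqHom n e) (laplacianHom n e) :=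
  fun f g => fischerPairing_sum_X_sq_mul (f : MvPolynomial (Fin n) ℂ) g

theorem laplacianHom_surjective (hn : 1 ≤ n) (e : ℕ) : Function.Surjective (laplacianHom n e) :=
  (isAdjointPair_mulSumXSqHom_laplacianHom e).surjective_of_injective
    (homogeneousFischerPairing_injective e) (homogeneousFischerPairing_injective (e + 2))
    (mulSumXSqHom_injective hn e)

theorem harmSubmodule_eq_map_ker_laplacianHom (e : ℕ) :
    harmSubmodule n (e + 2) =
      (LinearMap.ker (laplacianHom n e)).map (homogeneousSubmodule (Fin n) ℂ (e + 2)).subtype := by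
  rw [laplacianHom, LinearMap.ker_restrict, Submodule.map_comap_subtype, harmSubmodule]

theorem finrank_harmSubmodule_add_finrank (hn : 1 ≤ n) (e : ℕ) :
    finrank ℂ (harmSubmodule n (e + 2)) + finrank ℂ (homogeneousSubmodule (Fin n) ℂ e) =
      finrank ℂ (homogeneousSubmodule (Fin n) ℂ (e + 2)) := by
  rw [harmSubmodule_eq_map_ker_laplacianHom, Submodule.finrank_map_subtype_eq, add_comm,
    ← LinearMap.finrank_range_add_finrank_ker (laplacianHom n e),
    LinearMap.range_eq_top.mpr (laplacianHom_surjective hn e), finrank_top]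

theorem harmSubmodule_eq_homogeneousSubmodule_of_lt_two {d : ℕ} (hd : d < 2) :
    harmSubmodule n d = homogeneousSubmodule (Fin n) ℂ d :=
  inf_eq_left.mpr fun _ hf => polyLaplacian_eq_zero_of_isHomogeneous_of_lt_two hd hf

end Laplacian

/-- the Laplace operator maps `Pol_{=d}(ℂ^n)` onto `Pol_{=d-2}(ℂ^n)`,
and `dim Harm_d = binom(n+d-1, n-1) - binom(n+d-3, n-1)` (the second binomial being
`0` when `n + d - 3 < n - 1`, i.e. when `d < 2`). -/
theorem laplacian_surjective_and_harm_finrank (n d : ℕ) (hn : 1 ≤ n) :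
    (2 ≤ d → ∀ g ∈ homogeneousSubmodule (Fin n) ℂ (d - 2),
      ∃ f ∈ homogeneousSubmodule (Fin n) ℂ d, polyLaplacian n f = g) ∧
    (Module.finrank ℂ (harmSubmodule n d) : ℤ) =
      ((n + d - 1).choose (n - 1) : ℤ) -
        (if 2 ≤ d then ((n + d - 3).choose (n - 1) : ℤ) else 0) := by
  have finrank_homogeneous (k : ℕ) :
      finrank ℂ (homogeneousSubmodule (Fin n) ℂ k) = (n + k - 1).choose (n - 1) := by
    rw [finrank_homogeneousSubmodule, Fintype.card_fin,
      Nat.choose_symm_of_eq_add (by omega : n + k - 1 = k + (n - 1))]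
  constructor
  · intro hd g hg
    obtain ⟨e, rfl⟩ := Nat.exists_eq_add_of_le' hd
    obtain ⟨f, hf⟩ := laplacianHom_surjective hn e ⟨g, by simpa using hg⟩
    exact ⟨f, f.2, congrArg Subtype.val hf⟩
  · split_ifs with hd
    · obtain ⟨e, rfl⟩ := Nat.exists_eq_add_of_le' hd
      have h := finrank_harmSubmodule_add_finrank hn e
      rw [finrank_homogeneous, finrank_homogeneous] at h
      rw [show n + (e + 2) - 3 = n + e - 1 by omega]
      omega
    · rw [harmSubmodule_eq_homogeneousSubmodule_of_lt_two (by omega), finrank_homogeneous, sub_zero]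
end
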